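/- Let (T,d) be a compact metric space, m a Borel probability measure on T, φ a Young function with φ(1)=1, and R > 2. Then for every bounded Borel function f : T → ℝ, all integers 0 ≤ k ≤ l, and every x ∈ T: S_l S_{l-1} ⋯ S_k |f| (x) ≤ φ(R^k) ∫_{B^l_k(x)} |f(u)| m(du). -/

import Mathlib

open MeasureTheory ENNReal Filter

noncomputable section

/-- A (finite) Young function: an increasing convex function `φ : [0,∞) → [0,∞)`
with `φ 0 = 0` and `φ x → ∞` as `x → ∞`. -/
def IsYoungFunction (φ : ℝ → ℝ) : Prop :=
  MonotoneOn φ (Set.Ici 0) ∧ ConvexOn ℝ (Set.Ici 0) φ ∧ φ 0 = 0 ∧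
    Tendsto φ atTop atTop

/-- Generalized inverse of a Young function, as a map `ℝ≥0∞ → ℝ≥0∞`
(so that in particular `φ⁻¹(∞) = ∞`). -/
def yinv (φ : ℝ → ℝ) (y : ℝ≥0∞) : ℝ≥0∞ :=
  sInf {x : ℝ≥0∞ | ∃ r : ℝ, 0 ≤ r ∧ x = ENNReal.ofReal r ∧ y ≤ ENNReal.ofReal (φ r)}

/-- The minorizing metric
`τ_{m,φ}(s,t) = max_{x ∈ {s,t}} ∫_0^{d(s,t)} φ⁻¹(1 / m(B(x,ε))) dε`,
with the conventions `1/0 = ∞`, `φ⁻¹(∞) = ∞`. -/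
def tauDist {T : Type*} [MetricSpace T] [MeasurableSpace T]
    (m : Measure T) (φ : ℝ → ℝ) (s t : T) : ℝ≥0∞ :=
  max (∫⁻ ε in Set.Ioc (0 : ℝ) (dist s t), yinv φ (1 / m (Metric.closedBall s ε)))
    (∫⁻ ε in Set.Ioc (0 : ℝ) (dist s t), yinv φ (1 / m (Metric.closedBall t ε)))

/-- `f^d(u,v) = |f(u) - f(v)| / d(u,v)`, equal to `0` on the diagonal. -/
def fdiv {T : Type*} [MetricSpace T] (f : T → ℝ) (p : T × T) : ℝ :=
  |f p.1 - f p.2| / dist p.1 p.2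

/-- The Luxemburg norm `|g|^ν_χ = inf {a > 0 : ∫ χ(|g|/a) dν ≤ 1}`, with value `∞`
if no such `a` exists. -/
def luxNorm {X : Type*} [MeasurableSpace X] (ν : Measure X) (χ : ℝ → ℝ)
    (g : X → ℝ) : ℝ≥0∞ :=
  sInf {a : ℝ≥0∞ | ∃ b : ℝ, 0 < b ∧ a = ENNReal.ofReal b ∧
    ∫⁻ u, ENNReal.ofReal (χ (|g u| / b)) ∂ν ≤ 1}

/-- The Amemiya norm `‖g‖^μ_χ = inf_{a>0} a (1 + ∫ χ(|g|/a) dμ)`. -/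
def amemiyaNorm {X : Type*} [MeasurableSpace X] (μ : Measure X) (χ : ℝ → ℝ)
    (g : X → ℝ) : ℝ≥0∞ :=
  sInf {c : ℝ≥0∞ | ∃ a : ℝ, 0 < a ∧
    c = ENNReal.ofReal a * (1 + ∫⁻ u, ENNReal.ofReal (χ (|g u| / a)) ∂μ)}

/-- `r_0(x) = D(T)` and, for `k ≥ 1`,
`r_k(x) = min {ε ≥ 0 : 1 / m(B(x,ε)) ≤ φ(R^k)}` (with `1/0 = ∞`). -/
def rad {T : Type*} [MetricSpace T] [MeasurableSpace T]
    (m : Measure T) (φ : ℝ → ℝ) (R : ℝ) : ℕ → T → ℝ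
  | 0, _ => Metric.diam (Set.univ : Set T)
  | k + 1, x => sInf {ε : ℝ | 0 ≤ ε ∧
      1 / m (Metric.closedBall x ε) ≤ ENNReal.ofReal (φ (R ^ (k + 1)))}

/-- `r^l_k(x) = ∑_{i=k}^{l} 2^(i-k) r_i(x)`. -/
def radl {T : Type*} [MetricSpace T] [MeasurableSpace T]
    (m : Measure T) (φ : ℝ → ℝ) (R : ℝ) (k l : ℕ) (x : T) : ℝ :=
  ∑ i ∈ Finset.Icc k l, (2 : ℝ) ^ (i - k) * rad m φ R i x

/-- The averaging operator `S_k f (x) = (1 / m(B_k(x))) ∫_{B_k(x)} f dm`,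
with the convention `0/0 = 0`. -/
def avg {T : Type*} [MetricSpace T] [MeasurableSpace T]
    (m : Measure T) (φ : ℝ → ℝ) (R : ℝ) (k : ℕ) (f : T → ℝ) (x : T) : ℝ :=
  (∫ u in Metric.closedBall x (rad m φ R k x), f u ∂m) /
    (m (Metric.closedBall x (rad m φ R k x))).toReal

/-- The iterated averaging operator `iterAvg k l f = S_l S_{l-1} ⋯ S_k f` (for `k ≤ l`). -/
def iterAvg {T : Type*} [MetricSpace T] [MeasurableSpace T]
    (m : Measure T) (φ : ℝ → ℝ) (R : ℝ) (k : ℕ) : ℕ → (T → ℝ) → T → ℝ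
  | 0, f => avg m φ R 0 f
  | l + 1, f =>
      if l + 1 ≤ k then avg m φ R (l + 1) f
      else avg m φ R (l + 1) (iterAvg m φ R k l f)

/-- The set `{k ≥ 1 : B^l_k(s) ∪ B^l_k(t) ⊆ B°(u, r_{k-1}(u)) for every u ∈ B^l_k(x)}`,
whose greatest element is `τ_x`. -/
def tauSet {T : Type*} [MetricSpace T] [MeasurableSpace T]
    (m : Measure T) (φ : ℝ → ℝ) (R : ℝ) (l : ℕ) (s t x : T) : Set ℕ :=
  {k : ℕ | 1 ≤ k ∧ ∀ u ∈ Metric.closedBall x (radl m φ R k l x),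
    Metric.closedBall s (radl m φ R k l s) ∪ Metric.closedBall t (radl m φ R k l t) ⊆
      Metric.ball u (rad m φ R (k - 1) u)}

/-!
Since `φ(R^k) ≥ φ 1 = 1 = m(T)`, every ball `B_k(x)` has mass at least `1 / φ(R^k)`: for `k = 0`
because `B_0(x) = T`, and for `k ≥ 1` by the definition of `r_k` (the infimum is over a nonempty
set and is attained because `ε ↦ m(B(x,ε))` is right-continuous). Hence `S_k g (x) ≤ φ(R^k) ∫_{B_k(x)} g` for `g ≥ 0`, which
is the case `l = k`. For the induction step, `r_k(u) ≤ r_k(x) + d(u,x)` gives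
`B^l_k(u) ⊆ B^{l+1}_k(x)` whenever `u ∈ B_{l+1}(x)`, since `∑_{i=k}^{l} 2^{i-k} + 1 = 2^{l+1-k}`.
So `S_l ⋯ S_k |f|` is bounded on `B_{l+1}(x)` by `φ(R^k) ∫_{B^{l+1}_k(x)} |f|`, and averaging
with `S_{l+1}` preserves this bound.
-/

open Metric

lemma one_le_apply_pow {φ : ℝ → ℝ} (hφ : MonotoneOn φ (Set.Ici 0)) (hφ1 : φ 1 = 1)
    {R : ℝ} (hR : 1 ≤ R) (k : ℕ) : 1 ≤ φ (R ^ k) :=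
  hφ1 ▸ hφ (Set.mem_Ici.mpr zero_le_one) (Set.mem_Ici.mpr (by positivity)) (one_le_pow₀ hR)

lemma le_measure_closedBall_of_forall_gt {X : Type*} [PseudoMetricSpace X] [MeasurableSpace X]
    [OpensMeasurableSpace X] (μ : Measure X) [IsFiniteMeasure μ] {x : X} {r : ℝ} {c : ℝ≥0∞}
    (h : ∀ ε > r, c ≤ μ (closedBall x ε)) : c ≤ μ (closedBall x r) := by
  have hlim := tendsto_measure_biInter_gt (μ := μ) (s := closedBall x) (a := r)
    (fun _ _ => measurableSet_closedBall.nullMeasurableSet)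
    (fun _ _ _ hij => closedBall_subset_closedBall hij) ⟨r + 1, by linarith, measure_ne_top _ _⟩
  rw [biInter_gt_closedBall] at hlim
  exact ge_of_tendsto hlim (eventually_nhdsWithin_of_forall h)

lemma closedBall_diam_univ {X : Type*} [PseudoMetricSpace X] [BoundedSpace X] (x : X) :
    closedBall x (diam (Set.univ : Set X)) = Set.univ :=
  Set.eq_univ_of_forall fun _ =>
    dist_le_diam_of_mem (Bornology.isBounded_univ.mpr ‹_›) trivial trivial

lemma sum_Icc_two_pow_sub (k l : ℕ) :
    ∑ i ∈ Finset.Icc k l, (2 : ℝ) ^ (i - k) = 2 ^ (l + 1 - k) - 1 := by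
  rw [← Finset.Ico_add_one_right_eq_Icc, Finset.sum_Ico_eq_sum_range]
  simp only [add_tsub_cancel_left]
  rw [geom_sum_eq (by norm_num)]
  norm_num

section Radii

variable {T : Type*} [MetricSpace T] [MeasurableSpace T] (m : Measure T) {φ : ℝ → ℝ} {R : ℝ}

lemma rad_nonneg (k : ℕ) (x : T) : 0 ≤ rad m φ R k x := by
  cases k with
  | zero => exact diam_nonneg
  | succ k => exact Real.sInf_nonneg fun _ hε => hε.1

lemma radl_self (k : ℕ) (x : T) : radl m φ R k k x = rad m φ R k x := by
  simp [radl]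

lemma radl_succ {k l : ℕ} (hkl : k ≤ l + 1) (x : T) :
    radl m φ R k (l + 1) x = radl m φ R k l x + 2 ^ (l + 1 - k) * rad m φ R (l + 1) x :=
  Finset.sum_Icc_succ_top hkl _

variable [BoundedSpace T] [OpensMeasurableSpace T] [IsProbabilityMeasure m]

lemma inv_le_measure_closedBall_rad {k : ℕ} (hφR : 1 ≤ φ (R ^ k)) (x : T) :
    (ENNReal.ofReal (φ (R ^ k)))⁻¹ ≤ m (closedBall x (rad m φ R k x)) := by
  have hφR' : 1 ≤ ENNReal.ofReal (φ (R ^ k)) := ENNReal.one_le_ofReal.mpr hφR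
  cases k with
  | zero =>
    simpa [rad, closedBall_diam_univ] using ENNReal.inv_le_one.mpr hφR'
  | succ k =>
    have hdiam : diam (Set.univ : Set T) ∈ {ε : ℝ | 0 ≤ ε ∧
        1 / m (closedBall x ε) ≤ ENNReal.ofReal (φ (R ^ (k + 1)))} :=
      ⟨diam_nonneg, by simpa [closedBall_diam_univ] using hφR'⟩
    refine le_measure_closedBall_of_forall_gt m fun ε hε => ?_
    obtain ⟨δ, ⟨-, hδ⟩, hδε⟩ := exists_lt_of_csInf_lt ⟨_, hdiam⟩ hε
    rw [one_div] at hδ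
    exact (ENNReal.inv_le_iff_inv_le.mp hδ).trans
      (measure_mono (closedBall_subset_closedBall hδε.le))

lemma one_le_mul_measureReal_closedBall_rad {k : ℕ} (hφR : 1 ≤ φ (R ^ k)) (x : T) :
    1 ≤ φ (R ^ k) * m.real (closedBall x (rad m φ R k x)) := by
  have h := ENNReal.toReal_mono (measure_ne_top m _) (inv_le_measure_closedBall_rad m hφR x)
  rw [ENNReal.toReal_inv, ENNReal.toReal_ofReal (by linarith)] at h
  rwa [Measure.real, ← inv_mul_le_iff₀ (by linarith), mul_one]

lemma rad_le_rad_add_dist {k : ℕ} (hφR : 1 ≤ φ (R ^ k)) (x u : T) :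
    rad m φ R k u ≤ rad m φ R k x + dist u x := by
  cases k with
  | zero => exact le_add_of_nonneg_right dist_nonneg
  | succ k =>
    refine csInf_le ⟨0, fun _ hε => hε.1⟩
      ⟨add_nonneg (rad_nonneg m _ x) dist_nonneg, ?_⟩
    rw [one_div, ENNReal.inv_le_iff_inv_le]
    exact (inv_le_measure_closedBall_rad m hφR x).trans
      (measure_mono (closedBall_subset_closedBall' (by rw [dist_comm])))

lemma radl_le_radl_add_dist (hφR : ∀ i, 1 ≤ φ (R ^ i)) (k l : ℕ) (x u : T) :
    radl m φ R k l u ≤ radl m φ R k l x + (2 ^ (l + 1 - k) - 1) * dist u x := by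
  rw [← sum_Icc_two_pow_sub, Finset.sum_mul, radl, radl, ← Finset.sum_add_distrib]
  refine Finset.sum_le_sum fun i _ => ?_
  rw [← mul_add]
  exact mul_le_mul_of_nonneg_left (rad_le_rad_add_dist m (hφR i) x u) (by positivity)

lemma closedBall_radl_subset_closedBall_radl_succ (hφR : ∀ i, 1 ≤ φ (R ^ i)) {k l : ℕ}
    (hkl : k ≤ l + 1) {x u : T} (hu : u ∈ closedBall x (rad m φ R (l + 1) x)) :
    closedBall u (radl m φ R k l u) ⊆ closedBall x (radl m φ R k (l + 1) x) := by
  refine closedBall_subset_closedBall' ?_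
  have hu' : dist u x ≤ rad m φ R (l + 1) x := mem_closedBall.mp hu
  have h2 : (0 : ℝ) < 2 ^ (l + 1 - k) := by positivity
  rw [radl_succ m hkl]
  nlinarith [radl_le_radl_add_dist m hφR k l x u, dist_nonneg (x := u) (y := x)]

end Radii

section Averages

variable {T : Type*} [MetricSpace T] [MeasurableSpace T] (m : Measure T) {φ : ℝ → ℝ} {R : ℝ}

lemma avg_nonneg {k : ℕ} {g : T → ℝ} (hg : 0 ≤ g) (x : T) : 0 ≤ avg m φ R k g x :=
  div_nonneg (integral_nonneg hg) ENNReal.toReal_nonneg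

lemma iterAvg_nonneg (k l : ℕ) {f : T → ℝ} (hf : 0 ≤ f) : 0 ≤ iterAvg m φ R k l f := by
  induction l with
  | zero => exact avg_nonneg m hf
  | succ l ih =>
    intro x
    unfold iterAvg
    split
    · exact avg_nonneg m hf x
    · exact avg_nonneg m ih x

lemma iterAvg_self (k : ℕ) (f : T → ℝ) : iterAvg m φ R k k f = avg m φ R k f := by
  cases k with
  | zero => rfl
  | succ k => simp [iterAvg]

lemma iterAvg_succ {k l : ℕ} (hkl : k ≤ l) (f : T → ℝ) :
    iterAvg m φ R k (l + 1) f = avg m φ R (l + 1) (iterAvg m φ R k l f) := by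
  rw [iterAvg, if_neg (by omega)]

variable [BoundedSpace T] [OpensMeasurableSpace T] [IsProbabilityMeasure m]

lemma avg_le_of_abs_le {k : ℕ} (hφR : 1 ≤ φ (R ^ k)) {g : T → ℝ} {C : ℝ} {x : T}
    (hg : ∀ u ∈ closedBall x (rad m φ R k x), |g u| ≤ C) : avg m φ R k g x ≤ C := by
  have hpos : 0 < m.real (closedBall x (rad m φ R k x)) := by
    nlinarith [one_le_mul_measureReal_closedBall_rad m hφR x]
  rw [avg, ← Measure.real, div_le_iff₀ hpos]
  exact (le_abs_self _).trans (norm_setIntegral_le_of_norm_le_const (measure_lt_top m _)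
    fun u hu => (Real.norm_eq_abs _).trans_le (hg u hu))

lemma avg_le_mul_setIntegral {k : ℕ} (hφR : 1 ≤ φ (R ^ k)) {g : T → ℝ} (hg : 0 ≤ g) (x : T) :
    avg m φ R k g x ≤ φ (R ^ k) * ∫ u in closedBall x (rad m φ R k x), g u ∂m := by
  have hI : 0 ≤ ∫ u in closedBall x (rad m φ R k x), g u ∂m := integral_nonneg hg
  have hM := one_le_mul_measureReal_closedBall_rad m hφR x
  rw [avg, ← Measure.real, div_le_iff₀ (by nlinarith)]
  nlinarith

theorem iterAvg_le_mul_setIntegral_radl (hφR : ∀ i, 1 ≤ φ (R ^ i)) {f : T → ℝ} (hf : 0 ≤ f)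
    (hfi : Integrable f m) {k l : ℕ} (hkl : k ≤ l) (x : T) :
    iterAvg m φ R k l f x ≤ φ (R ^ k) * ∫ u in closedBall x (radl m φ R k l x), f u ∂m := by
  induction l, hkl using Nat.le_induction generalizing x with
  | base => simpa only [iterAvg_self, radl_self] using avg_le_mul_setIntegral m (hφR k) hf x
  | succ l hkl ih =>
    rw [iterAvg_succ m hkl]
    refine avg_le_of_abs_le m (hφR _) fun u hu => ?_
    rw [abs_of_nonneg (iterAvg_nonneg m k l hf u)]
    refine (ih u).trans (mul_le_mul_of_nonneg_left ?_ (by linarith [hφR k]))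
    exact setIntegral_mono_set hfi.integrableOn (.of_forall hf)
      (closedBall_radl_subset_closedBall_radl_succ m hφR (by omega) hu).eventuallyLE

end Averages

/-- Corollary 3 of the paper. -/
theorem statement15 (T : Type) [MetricSpace T] [CompactSpace T]
    [MeasurableSpace T] [BorelSpace T]
    (m : Measure T) (hm : IsProbabilityMeasure m)
    (φ : ℝ → ℝ) (hφ : IsYoungFunction φ) (hφ1 : φ 1 = 1)
    (R : ℝ) (hR : 2 < R)
    (f : T → ℝ) (hf : Measurable f) (hbd : ∃ C : ℝ, ∀ u : T, |f u| ≤ C)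
    (k l : ℕ) (hkl : k ≤ l) (x : T) :
    iterAvg m φ R k l (fun u => |f u|) x ≤
      φ (R ^ k) * ∫ u in Metric.closedBall x (radl m φ R k l x), |f u| ∂m := by
  obtain ⟨C, hC⟩ := hbd
  have hfi : Integrable f m :=
    (integrable_const C).mono' hf.aestronglyMeasurable (.of_forall fun u => by simpa using hC u)
  exact iterAvg_le_mul_setIntegral_radl m (one_le_apply_pow hφ.1 hφ1 (by linarith))
    (fun u => abs_nonneg (f u)) hfi.abs hkl x
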